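/- arXiv:2512.11765 — 2 statements merged into one kernel-verified Lean document; each statement's English description precedes it below -/
import Mathlib

section
/- Let n ≥ 2 be an integer, ρ > 0, θ ≥ 0, 0 = t_0 < t_1 < ⋯ < t_N = T a time grid, and x_1,…,x_n ∈ ℝ with mean x̄ := (1/n)Σ_{j=1}^n x_j. Define ξ*_i := x̄·v + (x_i − x̄)·w for i = 1,…,n. Then 1^⊤ξ*_i = x_i for every i, and for every i and every η ∈ ℝ^{N+1} with 1^⊤η = x_i one has (1/2)·η^⊤Γ^θη + η^⊤Γ̃(Σ_{j≠i}ξ*_j) ≥ (1/2)·(ξ*_i)^⊤Γ^θξ*_i + (ξ*_i)^⊤Γ̃(Σ_{j≠i}ξ*_j), with equality if and only if η = ξ*_i. In other words, (ξ*_1,…,ξ*_n) is a (strict) deterministic Nash equilibrium of the n-trader execution game. -/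
open Matrix Finset

noncomputable section

/-- The matrix `Γ^θ`. -/
def Gam (ρ θ : ℝ) {N : ℕ} (t : Fin (N + 1) → ℝ) : Matrix (Fin (N + 1)) (Fin (N + 1)) ℝ :=
  Matrix.of (fun i j => Real.exp (-(ρ * |t i - t j|)) + (if i = j then 2 * θ else 0))

/-- The matrix `Γ̃`. -/
def GamT (ρ : ℝ) {N : ℕ} (t : Fin (N + 1) → ℝ) : Matrix (Fin (N + 1)) (Fin (N + 1)) ℝ :=
  Matrix.of (fun i j =>
    if i < j then 0 else if i = j then 1 / 2 else Real.exp (-(ρ * (t i - t j))))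

/-- `ν := (Γ^θ + (n−1)Γ̃)^{−1} 1`. -/
def nuG (n : ℕ) (ρ θ : ℝ) {N : ℕ} (t : Fin (N + 1) → ℝ) : Fin (N + 1) → ℝ :=
  (Gam ρ θ t + ((n : ℝ) - 1) • GamT ρ t)⁻¹.mulVec 1

/-- `ω := (Γ^θ − Γ̃)^{−1} 1`. -/
def omG (ρ θ : ℝ) {N : ℕ} (t : Fin (N + 1) → ℝ) : Fin (N + 1) → ℝ :=
  (Gam ρ θ t - GamT ρ t)⁻¹.mulVec 1

/-- `v := ν / (1^⊤ν)`. -/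
def vG (n : ℕ) (ρ θ : ℝ) {N : ℕ} (t : Fin (N + 1) → ℝ) : Fin (N + 1) → ℝ :=
  (1 / ∑ k, nuG n ρ θ t k) • nuG n ρ θ t

/-- `w := ω / (1^⊤ω)`. -/
def wG (ρ θ : ℝ) {N : ℕ} (t : Fin (N + 1) → ℝ) : Fin (N + 1) → ℝ :=
  (1 / ∑ k, omG ρ θ t k) • omG ρ θ t

/-- The candidate equilibrium strategy `ξ*_i = x̄ v + (x_i − x̄) w`. -/
def xiStar (n : ℕ) (ρ θ : ℝ) {N : ℕ} (t : Fin (N + 1) → ℝ) (x : Fin n → ℝ) (i : Fin n) :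
    Fin (N + 1) → ℝ :=
  ((∑ j, x j) / (n : ℝ)) • vG n ρ θ t + (x i - (∑ j, x j) / (n : ℝ)) • wG ρ θ t

/-- Execution cost of a strategy `η` given the aggregate `g` of the opponents' strategies. -/
def costF (ρ θ : ℝ) {N : ℕ} (t : Fin (N + 1) → ℝ) (η g : Fin (N + 1) → ℝ) : ℝ :=
  (1 / 2) * (η ⬝ᵥ (Gam ρ θ t).mulVec η) + η ⬝ᵥ (GamT ρ t).mulVec g

lemma minKernel {N : ℕ} (u : Fin (N+1) → ℝ) (hu0 : 0 < u 0) (hu : StrictMono u)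
    (y : Fin (N+1) → ℝ) :
    0 ≤ ∑ i, ∑ j, y i * y j * min (u i) (u j) ∧
      ((∑ i, ∑ j, y i * y j * min (u i) (u j)) = 0 → y = 0) := by
  set U : ℕ → ℝ := fun k => u ⟨min k N, by omega⟩ with hU
  set S : ℕ → ℝ := fun k => ∑ i : Fin (N+1), if k < (i : ℕ) then y i else 0 with hS
  have hUval : ∀ m : ℕ, (hm : m ≤ N) → U m = u ⟨m, by omega⟩ := by
    intro m hm; simp only [hU]; congr 1; ext; simp [min_eq_left hm]
  have htel : ∀ m : ℕ, m ≤ N →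
      U 0 + ∑ k ∈ range N, (if k < m then U (k+1) - U k else 0) = U m := by
    intro m hm
    have h1 : ∑ k ∈ range N, (if k < m then U (k+1) - U k else 0)
        = ∑ k ∈ (range N).filter (fun k => k < m), (U (k+1) - U k) := by
      rw [Finset.sum_filter]
    have h2 : (range N).filter (fun k => k < m) = range m := by
      ext k; simp; omega
    rw [h1, h2, Finset.sum_range_sub]
    ring
  have hkey : ∀ i j : Fin (N+1), min (u i) (u j)
      = U 0 + ∑ k ∈ range N, (if k < (i:ℕ) ∧ k < (j:ℕ) then U (k+1) - U k else 0) := by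
    intro i j
    have h1 : min (u i) (u j) = U (min (i:ℕ) (j:ℕ)) := by
      rw [hUval _ (by omega)]
      rcases le_total (i:ℕ) (j:ℕ) with h | h
      · rw [min_eq_left (hu.le_iff_le.2 (by exact_mod_cast h))]
        congr 1; ext; simp [min_eq_left h]
      · rw [min_eq_right (hu.le_iff_le.2 (by exact_mod_cast h))]
        congr 1; ext; simp [min_eq_right h]
    rw [h1, ← htel _ (by omega)]
    congr 1
    apply Finset.sum_congr rfl
    intro k _
    congr 1
    simp [lt_min_iff]
  have hexp : ∀ i j : Fin (N+1), ∀ k : ℕ,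
      y i * y j * (if k < (i:ℕ) ∧ k < (j:ℕ) then U (k+1) - U k else 0)
      = ((if k < (i:ℕ) then y i else 0) * (if k < (j:ℕ) then y j else 0)) * (U (k+1) - U k) := by
    intro i j k
    by_cases hi : k < (i:ℕ) <;> by_cases hj : k < (j:ℕ) <;> simp [hi, hj] <;> ring
  have hQ : (∑ i, ∑ j, y i * y j * min (u i) (u j))
      = U 0 * (∑ i, y i)^2 + ∑ k ∈ range N, (U (k+1) - U k) * (S k)^2 := by
    have h0 : ∀ i j : Fin (N+1), y i * y j * min (u i) (u j)
        = y i * y j * U 0 + ∑ k ∈ range N,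
          ((if k < (i:ℕ) then y i else 0) * (if k < (j:ℕ) then y j else 0)) * (U (k+1) - U k) := by
      intro i j
      rw [hkey i j, mul_add, Finset.mul_sum]
      congr 1
      exact Finset.sum_congr rfl fun k _ => hexp i j k
    simp_rw [h0, Finset.sum_add_distrib]
    congr 1
    · rw [sq, Finset.sum_mul_sum]
      simp only [Finset.mul_sum]
      exact Finset.sum_congr rfl fun i _ => Finset.sum_congr rfl fun j _ => by ring
    · calc ∑ i : Fin (N+1), ∑ j : Fin (N+1), ∑ k ∈ range N,
            ((if k < (i:ℕ) then y i else 0) * (if k < (j:ℕ) then y j else 0)) * (U (k+1) - U k)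
          = ∑ i : Fin (N+1), ∑ k ∈ range N, ∑ j : Fin (N+1),
            ((if k < (i:ℕ) then y i else 0) * (if k < (j:ℕ) then y j else 0)) * (U (k+1) - U k) :=
            Finset.sum_congr rfl fun i _ => Finset.sum_comm
        _ = ∑ k ∈ range N, ∑ i : Fin (N+1), ∑ j : Fin (N+1),
            ((if k < (i:ℕ) then y i else 0) * (if k < (j:ℕ) then y j else 0)) * (U (k+1) - U k) :=
            Finset.sum_comm
        _ = ∑ k ∈ range N, (U (k+1) - U k) * (S k)^2 := by
            apply Finset.sum_congr rfl
            intro k _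
            rw [hS, sq, Finset.sum_mul_sum, Finset.mul_sum]
            exact Finset.sum_congr rfl fun i _ => by
              rw [Finset.mul_sum]
              exact Finset.sum_congr rfl fun j _ => by ring
  have hDpos : ∀ k ∈ range N, 0 < U (k+1) - U k := by
    intro k hk
    rw [Finset.mem_range] at hk
    rw [hUval (k+1) (by omega), hUval k (by omega)]
    have := hu (show (⟨k, by omega⟩ : Fin (N+1)) < ⟨k+1, by omega⟩ from by
      simp [Fin.mk_lt_mk])
    linarith
  have hterm : ∀ k ∈ range N, 0 ≤ (U (k+1) - U k) * (S k)^2 :=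
    fun k hk => mul_nonneg (hDpos k hk).le (sq_nonneg _)
  have hU0 : 0 < U 0 := by
    rw [hUval 0 (Nat.zero_le _)]
    exact hu0
  have h1 : 0 ≤ U 0 * (∑ i, y i)^2 := mul_nonneg hU0.le (sq_nonneg _)
  have h2 : 0 ≤ ∑ k ∈ range N, (U (k+1) - U k) * (S k)^2 := Finset.sum_nonneg hterm
  constructor
  · rw [hQ]; linarith
  · intro h
    rw [hQ] at h
    have hA1 : U 0 * (∑ i, y i)^2 = 0 := by linarith
    have hA2 : (∑ k ∈ range N, (U (k+1) - U k) * (S k)^2) = 0 := by linarith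
    have hT : (∑ i, y i) = 0 := by
      rcases mul_eq_zero.1 hA1 with h' | h'
      · exact absurd h' (ne_of_gt hU0)
      · exact (pow_eq_zero_iff two_ne_zero).1 h'
    have hSk : ∀ k : ℕ, k ≤ N → S k = 0 := by
      intro k hk
      rcases eq_or_lt_of_le hk with rfl | hk'
      · rw [hS]
        apply Finset.sum_eq_zero
        intro i _
        have hi := i.isLt
        rw [if_neg (by omega)]
      · have h' := (Finset.sum_eq_zero_iff_of_nonneg hterm).1 hA2 k (Finset.mem_range.2 hk')
        rcases mul_eq_zero.1 h' with h'' | h''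
        · exact absurd h'' (ne_of_gt (hDpos k (Finset.mem_range.2 hk')))
        · exact (pow_eq_zero_iff two_ne_zero).1 h''
    funext m
    have e1 : ∑ i : Fin (N+1), (if (m:ℕ) ≤ (i:ℕ) then y i else 0) = S (m:ℕ) + y m := by
      have hym : y m = ∑ i : Fin (N+1), if i = m then y i else 0 := by
        rw [Finset.sum_ite_eq' univ m y]; simp
      rw [hS, hym, ← Finset.sum_add_distrib]
      apply Finset.sum_congr rfl
      intro i _
      rcases lt_trichotomy ((i:ℕ)) ((m:ℕ)) with hlt | heq | hgt
      · rw [if_neg (by omega), if_neg (by omega), if_neg (by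
          intro hc; exact absurd (congrArg Fin.val hc) (by omega))]
        ring
      · have : i = m := Fin.ext heq
        subst this
        rw [if_pos (le_refl _), if_neg (by omega), if_pos rfl]
        ring
      · rw [if_pos (by omega), if_pos (by omega), if_neg (by
          intro hc; exact absurd (congrArg Fin.val hc) (by omega))]
        ring
    have e2 : ∑ i : Fin (N+1), (if (m:ℕ) ≤ (i:ℕ) then y i else 0)
        = if (m:ℕ) = 0 then (∑ i, y i) else S ((m:ℕ) - 1) := by
      by_cases hm : (m:ℕ) = 0
      · rw [if_pos hm]
        apply Finset.sum_congr rfl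
        intro i _
        rw [hm, if_pos (Nat.zero_le _)]
      · rw [if_neg hm, hS]
        apply Finset.sum_congr rfl
        intro i _
        exact if_congr (by omega) rfl rfl
    rw [e2] at e1
    have hm1 : S (m:ℕ) = 0 := hSk _ (by have := m.isLt; omega)
    by_cases hm : (m:ℕ) = 0
    · rw [if_pos hm, hT] at e1
      simp only [Pi.zero_apply]
      linarith [hm1]
    · rw [if_neg hm, hSk ((m:ℕ)-1) (by have := m.isLt; omega)] at e1
      simp only [Pi.zero_apply]
      linarith [hm1]

variable {N : ℕ} {ρ θ : ℝ} {t : Fin (N + 1) → ℝ}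

lemma gam_symm (i j : Fin (N+1)) : Gam ρ θ t i j = Gam ρ θ t j i := by
  simp only [Gam, of_apply, abs_sub_comm (t i) (t j)]
  congr 1
  simp [eq_comm]

lemma dot_gam_symm (a b : Fin (N+1) → ℝ) :
    a ⬝ᵥ (Gam ρ θ t) *ᵥ b = b ⬝ᵥ (Gam ρ θ t) *ᵥ a := by
  simp only [dotProduct, mulVec, Finset.mul_sum]
  rw [Finset.sum_comm]
  exact Finset.sum_congr rfl fun i _ => Finset.sum_congr rfl fun j _ => by
    rw [gam_symm j i]; ring

lemma quad0 (hρ : 0 < ρ) (hmono : StrictMono t) (x : Fin (N+1) → ℝ) :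
    0 ≤ x ⬝ᵥ (Gam ρ 0 t) *ᵥ x ∧ (x ⬝ᵥ (Gam ρ 0 t) *ᵥ x = 0 → x = 0) := by
  set y : Fin (N+1) → ℝ := fun i => x i * Real.exp (-(ρ * t i)) with hy
  set u : Fin (N+1) → ℝ := fun i => Real.exp (2*ρ*t i) with hu
  have hkey : ∀ a b : ℝ, Real.exp (-(ρ * |a - b|))
      = Real.exp (-(ρ*a)) * Real.exp (-(ρ*b)) * min (Real.exp (2*ρ*a)) (Real.exp (2*ρ*b)) := by
    intro a b
    rcases le_total a b with h | h
    · rw [abs_of_nonpos (by linarith), min_eq_left (Real.exp_le_exp.2 (by nlinarith)),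
        ← Real.exp_add, ← Real.exp_add]
      congr 1; ring
    · rw [abs_of_nonneg (by linarith), min_eq_right (Real.exp_le_exp.2 (by nlinarith)),
        ← Real.exp_add, ← Real.exp_add]
      congr 1; ring
  have hrw : x ⬝ᵥ (Gam ρ 0 t) *ᵥ x = ∑ i, ∑ j, y i * y j * min (u i) (u j) := by
    simp only [dotProduct, mulVec, Gam, of_apply, Finset.mul_sum]
    refine Finset.sum_congr rfl fun i _ => Finset.sum_congr rfl fun j _ => ?_
    simp only [hy, hu]
    rw [hkey (t i) (t j)]
    split_ifs <;> ring
  have hmk := minKernel u (Real.exp_pos _)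
    (fun a b hab => Real.exp_lt_exp.2 (by nlinarith [hmono hab])) y
  constructor
  · rw [hrw]; exact hmk.1
  · intro h
    have hy0 := hmk.2 (by rw [← hrw]; exact h)
    funext i
    have := congrFun hy0 i
    simp only [hy, Pi.zero_apply] at this ⊢
    rcases mul_eq_zero.1 this with h' | h'
    · exact h'
    · exact absurd h' (Real.exp_ne_zero _)

lemma quad_theta (x : Fin (N+1) → ℝ) :
    x ⬝ᵥ (Gam ρ θ t) *ᵥ x = x ⬝ᵥ (Gam ρ 0 t) *ᵥ x + 2*θ * ∑ i, (x i)^2 := by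
  simp only [dotProduct, mulVec, Gam, of_apply, Finset.mul_sum, mul_add, add_mul,
    mul_ite, ite_mul, mul_zero, zero_mul, Finset.sum_add_distrib, Finset.sum_ite_eq]
  simp [Finset.mul_sum, sq]
  exact Finset.sum_congr rfl fun i _ => by ring

lemma gamT_quad (hmono : StrictMono t) (x : Fin (N+1) → ℝ) :
    x ⬝ᵥ (GamT ρ t) *ᵥ x = (1/2) * (x ⬝ᵥ (Gam ρ 0 t) *ᵥ x) := by
  have hadd : ∀ i j : Fin (N+1), GamT ρ t i j + GamT ρ t j i = Gam ρ 0 t i j := by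
    intro i j
    rcases lt_trichotomy i j with h | h | h
    · have hji : ¬ j < i := by omega
      have hne : ¬ j = i := by omega
      have hne' : i ≠ j := by omega
      simp only [GamT, Gam, of_apply, if_pos h, if_neg hji, if_neg hne, if_neg hne', zero_add,
        add_zero]
      rw [abs_of_nonpos (by have := hmono h; linarith)]
      congr 1; ring
    · subst h
      simp [GamT, Gam]
      norm_num
    · have hij : ¬ i < j := by omega
      have hne : ¬ i = j := by omega
      have hne2 : ¬ j = i := by omega
      simp only [GamT, Gam, of_apply, if_pos h, if_neg hij, if_neg hne, if_neg hne2, add_zero]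
      rw [abs_of_nonneg (by have := hmono h; linarith)]
    -- done
  have e1 : x ⬝ᵥ (Gam ρ 0 t) *ᵥ x
      = (∑ i, ∑ j, x i * (GamT ρ t i j * x j)) + ∑ i, ∑ j, x i * (GamT ρ t j i * x j) := by
    simp only [dotProduct, mulVec, Finset.mul_sum]
    rw [← Finset.sum_add_distrib]
    refine Finset.sum_congr rfl fun i _ => ?_
    rw [← Finset.sum_add_distrib]
    refine Finset.sum_congr rfl fun j _ => ?_
    rw [← hadd i j]
    ring
  have e2 : ∑ i, ∑ j, x i * (GamT ρ t j i * x j) = ∑ i, ∑ j, x i * (GamT ρ t i j * x j) := by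
    rw [Finset.sum_comm]
    exact Finset.sum_congr rfl fun i _ => Finset.sum_congr rfl fun j _ => by ring
  have e3 : x ⬝ᵥ (GamT ρ t) *ᵥ x = ∑ i, ∑ j, x i * (GamT ρ t i j * x j) := by
    simp only [dotProduct, mulVec, Finset.mul_sum]
  rw [e3, e1, e2]
  ring


lemma matfacts (M : Matrix (Fin (N+1)) (Fin (N+1)) ℝ)
    (hpd : ∀ x : Fin (N+1) → ℝ, x ≠ 0 → 0 < x ⬝ᵥ M *ᵥ x) :
    M *ᵥ (M⁻¹ *ᵥ (1 : Fin (N+1) → ℝ)) = 1 ∧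
      0 < ∑ k, (M⁻¹ *ᵥ (1 : Fin (N+1) → ℝ)) k := by
  have hdet : M.det ≠ 0 := by
    intro h
    obtain ⟨v, hv, hMv⟩ := (Matrix.exists_mulVec_eq_zero_iff).2 h
    have := hpd v hv
    rw [hMv] at this
    simp [dotProduct] at this
  have hinv : M *ᵥ (M⁻¹ *ᵥ (1 : Fin (N+1) → ℝ)) = 1 := by
    rw [Matrix.mulVec_mulVec, Matrix.mul_nonsing_inv _ (isUnit_iff_ne_zero.2 hdet),
      Matrix.one_mulVec]
  refine ⟨hinv, ?_⟩
  set ν := M⁻¹ *ᵥ (1 : Fin (N+1) → ℝ) with hν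
  have hν0 : ν ≠ 0 := by
    intro h
    rw [h] at hinv
    simp only [Matrix.mulVec_zero] at hinv
    have := congrFun hinv 0
    simp at this
  have : 0 < ν ⬝ᵥ M *ᵥ ν := hpd ν hν0
  rw [hinv] at this
  simpa [dotProduct] using this

/-- `(ξ*_1,…,ξ*_n)` is a (strict) deterministic Nash equilibrium: each `ξ*_i` satisfies the
budget constraint and strictly minimizes the execution cost given the opponents' strategies. -/
theorem stmt2 (n : ℕ) (hn : 2 ≤ n) (ρ θ T : ℝ) (hρ : 0 < ρ) (hθ : 0 ≤ θ)
    (N : ℕ) (hN : 1 ≤ N) (t : Fin (N + 1) → ℝ)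
    (ht0 : t 0 = 0) (htT : t (Fin.last N) = T) (hmono : StrictMono t)
    (x : Fin n → ℝ) :
    ∀ i : Fin n,
      (∑ k, xiStar n ρ θ t x i k) = x i ∧
      ∀ η : Fin (N + 1) → ℝ, (∑ k, η k) = x i →
        (costF ρ θ t (xiStar n ρ θ t x i) (∑ j ∈ Finset.univ.erase i, xiStar n ρ θ t x j)
          ≤ costF ρ θ t η (∑ j ∈ Finset.univ.erase i, xiStar n ρ θ t x j)) ∧
        (costF ρ θ t η (∑ j ∈ Finset.univ.erase i, xiStar n ρ θ t x j)
            = costF ρ θ t (xiStar n ρ θ t x i) (∑ j ∈ Finset.univ.erase i, xiStar n ρ θ t x j)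
          ↔ η = xiStar n ρ θ t x i)  := by
  have hn1 : 1 ≤ n := by omega
  have hnR : (2:ℝ) ≤ (n:ℝ) := by exact_mod_cast hn
  have hn0 : (n:ℝ) ≠ 0 := by positivity
  -- quadratic form facts
  have hQ0 := fun z : Fin (N+1) → ℝ => quad0 hρ hmono z
  have hQ0pos : ∀ z : Fin (N+1) → ℝ, z ≠ 0 → 0 < z ⬝ᵥ Gam ρ 0 t *ᵥ z :=
    fun z hz => lt_of_le_of_ne (hQ0 z).1 fun h => hz ((hQ0 z).2 h.symm)
  have hsq : ∀ z : Fin (N+1) → ℝ, 0 ≤ ∑ k, (z k)^2 :=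
    fun z => Finset.sum_nonneg fun k _ => sq_nonneg _
  have hQθ : ∀ z : Fin (N+1) → ℝ, 0 ≤ z ⬝ᵥ Gam ρ θ t *ᵥ z := by
    intro z
    rw [quad_theta]
    nlinarith [(hQ0 z).1, hsq z, mul_nonneg hθ (hsq z)]
  have hQθ0 : ∀ z : Fin (N+1) → ℝ, z ⬝ᵥ Gam ρ θ t *ᵥ z = 0 → z = 0 := by
    intro z hz
    rw [quad_theta] at hz
    apply (hQ0 z).2
    nlinarith [(hQ0 z).1, hsq z, mul_nonneg hθ (hsq z)]
  have hApd : ∀ z : Fin (N+1) → ℝ, z ≠ 0 →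
      0 < z ⬝ᵥ (Gam ρ θ t + ((n:ℝ)-1) • GamT ρ t) *ᵥ z := by
    intro z hz
    have e : z ⬝ᵥ (Gam ρ θ t + ((n:ℝ)-1) • GamT ρ t) *ᵥ z
        = z ⬝ᵥ Gam ρ θ t *ᵥ z + ((n:ℝ)-1) * (z ⬝ᵥ GamT ρ t *ᵥ z) := by
      rw [Matrix.add_mulVec, dotProduct_add, Matrix.smul_mulVec, dotProduct_smul,
        smul_eq_mul]
    rw [e, gamT_quad hmono, quad_theta]
    have h0 := hQ0pos z hz
    nlinarith [hsq z, mul_nonneg hθ (hsq z),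
      mul_nonneg (by linarith : (0:ℝ) ≤ (n:ℝ)-2) h0.le]
  have hBpd : ∀ z : Fin (N+1) → ℝ, z ≠ 0 →
      0 < z ⬝ᵥ (Gam ρ θ t - GamT ρ t) *ᵥ z := by
    intro z hz
    have e : z ⬝ᵥ (Gam ρ θ t - GamT ρ t) *ᵥ z
        = z ⬝ᵥ Gam ρ θ t *ᵥ z - (z ⬝ᵥ GamT ρ t *ᵥ z) := by
      rw [Matrix.sub_mulVec, dotProduct_sub]
    rw [e, gamT_quad hmono, quad_theta]
    have h0 := hQ0pos z hz
    nlinarith [hsq z, mul_nonneg hθ (hsq z)]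
  obtain ⟨hAν, hsν⟩ := matfacts (Gam ρ θ t + ((n:ℝ)-1) • GamT ρ t) hApd
  obtain ⟨hBω, hsω⟩ := matfacts (Gam ρ θ t - GamT ρ t) hBpd
  have hAν' : (Gam ρ θ t + ((n:ℝ)-1) • GamT ρ t) *ᵥ nuG n ρ θ t = 1 := hAν
  have hBω' : (Gam ρ θ t - GamT ρ t) *ᵥ omG ρ θ t = 1 := hBω
  have hsν' : 0 < ∑ k, nuG n ρ θ t k := hsν
  have hsω' : 0 < ∑ k, omG ρ θ t k := hsω
  have hAv : (Gam ρ θ t + ((n:ℝ)-1) • GamT ρ t) *ᵥ vG n ρ θ t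
      = (1 / ∑ k, nuG n ρ θ t k) • (1 : Fin (N+1) → ℝ) := by
    unfold vG
    rw [Matrix.mulVec_smul, hAν']
  have hBw : (Gam ρ θ t - GamT ρ t) *ᵥ wG ρ θ t
      = (1 / ∑ k, omG ρ θ t k) • (1 : Fin (N+1) → ℝ) := by
    unfold wG
    rw [Matrix.mulVec_smul, hBω']
  have hsumv : ∑ k, vG n ρ θ t k = 1 := by
    unfold vG
    simp only [Pi.smul_apply, smul_eq_mul, ← Finset.mul_sum]
    rw [one_div, inv_mul_cancel₀ (ne_of_gt hsν')]
  have hsumw : ∑ k, wG ρ θ t k = 1 := by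
    unfold wG
    simp only [Pi.smul_apply, smul_eq_mul, ← Finset.mul_sum]
    rw [one_div, inv_mul_cancel₀ (ne_of_gt hsω')]
  intro i
  have hbudget : ∑ k, xiStar n ρ θ t x i k = x i := by
    unfold xiStar
    simp only [Pi.add_apply, Pi.smul_apply, smul_eq_mul]
    rw [Finset.sum_add_distrib, ← Finset.mul_sum, ← Finset.mul_sum, hsumv, hsumw]
    ring
  refine ⟨hbudget, ?_⟩
  intro η hη
  have hcard : (Finset.univ.erase i).card = n - 1 := by
    rw [Finset.card_erase_of_mem (Finset.mem_univ i), Finset.card_univ, Fintype.card_fin]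
  have hcast : ((n - 1 : ℕ) : ℝ) = (n:ℝ) - 1 := by
    rw [Nat.cast_sub hn1]; norm_num
  have herase : ∑ j ∈ Finset.univ.erase i, x j = (∑ j, x j) - x i := by
    rw [← Finset.sum_erase_add Finset.univ x (Finset.mem_univ i)]; ring
  have hgval : (∑ j ∈ Finset.univ.erase i, xiStar n ρ θ t x j)
      = (((n:ℝ)-1) * ((∑ j, x j)/(n:ℝ))) • vG n ρ θ t
        + ((∑ j, x j)/(n:ℝ) - x i) • wG ρ θ t := by
    unfold xiStar
    rw [Finset.sum_add_distrib, ← Finset.sum_smul, ← Finset.sum_smul]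
    congr 1
    · congr 1
      rw [Finset.sum_const, hcard, nsmul_eq_mul, hcast]
    · congr 1
      rw [Finset.sum_sub_distrib, herase, Finset.sum_const, hcard, nsmul_eq_mul, hcast]
      field_simp
      ring
  set ξ := xiStar n ρ θ t x i with hξdef
  set g := ∑ j ∈ Finset.univ.erase i, xiStar n ρ θ t x j with hgdef
  have hfoc : Gam ρ θ t *ᵥ ξ + GamT ρ t *ᵥ g
      = (((∑ j, x j)/(n:ℝ)) * (1 / ∑ k, nuG n ρ θ t k)
          + (x i - (∑ j, x j)/(n:ℝ)) * (1 / ∑ k, omG ρ θ t k)) • (1 : Fin (N+1) → ℝ) := by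
    have hξval : ξ = ((∑ j, x j)/(n:ℝ)) • vG n ρ θ t
        + (x i - (∑ j, x j)/(n:ℝ)) • wG ρ θ t := rfl
    rw [hξval, hgval]
    rw [Matrix.mulVec_add, Matrix.mulVec_smul, Matrix.mulVec_smul, Matrix.mulVec_add,
      Matrix.mulVec_smul, Matrix.mulVec_smul]
    have h1 : Gam ρ θ t *ᵥ vG n ρ θ t + ((n:ℝ)-1) • (GamT ρ t *ᵥ vG n ρ θ t)
        = (1 / ∑ k, nuG n ρ θ t k) • (1 : Fin (N+1) → ℝ) := by
      rw [← Matrix.smul_mulVec, ← Matrix.add_mulVec]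
      exact hAv
    have h2 : Gam ρ θ t *ᵥ wG ρ θ t - GamT ρ t *ᵥ wG ρ θ t
        = (1 / ∑ k, omG ρ θ t k) • (1 : Fin (N+1) → ℝ) := by
      rw [← Matrix.sub_mulVec]
      exact hBw
    calc ((∑ j, x j)/(n:ℝ)) • (Gam ρ θ t *ᵥ vG n ρ θ t)
          + (x i - (∑ j, x j)/(n:ℝ)) • (Gam ρ θ t *ᵥ wG ρ θ t)
          + ((((n:ℝ)-1) * ((∑ j, x j)/(n:ℝ))) • (GamT ρ t *ᵥ vG n ρ θ t)
            + ((∑ j, x j)/(n:ℝ) - x i) • (GamT ρ t *ᵥ wG ρ θ t))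
        = ((∑ j, x j)/(n:ℝ)) • (Gam ρ θ t *ᵥ vG n ρ θ t
            + ((n:ℝ)-1) • (GamT ρ t *ᵥ vG n ρ θ t))
          + (x i - (∑ j, x j)/(n:ℝ)) • (Gam ρ θ t *ᵥ wG ρ θ t - GamT ρ t *ᵥ wG ρ θ t) := by
          module
      _ = ((∑ j, x j)/(n:ℝ)) • ((1 / ∑ k, nuG n ρ θ t k) • (1 : Fin (N+1) → ℝ))
          + (x i - (∑ j, x j)/(n:ℝ)) • ((1 / ∑ k, omG ρ θ t k) • (1 : Fin (N+1) → ℝ)) := by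
          rw [h1, h2]
      _ = _ := by module
  set d := η - ξ with hddef
  have hdsum : ∑ k, d k = 0 := by
    rw [hddef]
    simp only [Pi.sub_apply]
    rw [Finset.sum_sub_distrib, hη, hbudget]
    ring
  have hzero : d ⬝ᵥ (Gam ρ θ t *ᵥ ξ) + d ⬝ᵥ (GamT ρ t *ᵥ g) = 0 := by
    rw [← dotProduct_add, hfoc, dotProduct_smul, smul_eq_mul]
    have hone : d ⬝ᵥ (1 : Fin (N+1) → ℝ) = ∑ k, d k := by simp [dotProduct]
    rw [hone, hdsum, mul_zero]
  have hcost : costF ρ θ t η g = costF ρ θ t ξ g + (1/2) * (d ⬝ᵥ Gam ρ θ t *ᵥ d) := by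
    have hηd : η = ξ + d := by rw [hddef]; abel
    rw [costF, costF, hηd]
    rw [Matrix.mulVec_add, dotProduct_add, add_dotProduct, add_dotProduct, add_dotProduct]
    have hsymm : ξ ⬝ᵥ Gam ρ θ t *ᵥ d = d ⬝ᵥ Gam ρ θ t *ᵥ ξ := dot_gam_symm ξ d
    rw [hsymm]
    linarith [hzero]
  refine ⟨?_, ?_⟩
  · rw [hcost]
    linarith [hQθ d]
  · rw [hcost]
    constructor
    · intro h
      have hd0 : d ⬝ᵥ Gam ρ θ t *ᵥ d = 0 := by linarith
      have hdz := hQθ0 d hd0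
      rw [hddef] at hdz
      exact sub_eq_zero.1 hdz
    · intro h
      have hdz : d = 0 := by rw [hddef, h]; abel
      rw [hdz]
      simp
end
end

section
/- Let n ≥ 2 be an integer, ρ > 0, T > 0, θ ≥ 0, N ≥ 2, α := e^{−ρT/N}, and κ := 2θ + (n−1)/2. Then the tridiagonal matrix B is nonsingular, and its inverse is given entrywise by (B^{−1})_{ij} = (ακ)^{j−i}·δ_{i−1}·φ_{j+1}/δ_{N+1} if i ≤ j and (B^{−1})_{ij} = (α(κ+1−n))^{i−j}·δ_{j−1}·φ_{i+1}/δ_{N+1} if i ≥ j, for all i,j ∈ {1,…,N+1}. -/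
open Matrix Finset

noncomputable section

/-- Entries of the tridiagonal matrix `B` (`0`-based indices; paper index = Lean index + 1). -/
def Bf (N n : ℕ) (κ α : ℝ) (i j : ℕ) : ℝ :=
  if i = j then
    (if i = 0 then 1 - (n : ℝ) * α ^ 2 + κ
     else if i = N then 1 - α ^ 2 + κ
     else 1 + α ^ 2 * (κ - (n : ℝ)) + κ)
  else if j = i + 1 then -(α * κ)
  else if i = j + 1 then -(α * (κ + 1 - (n : ℝ)))
  else 0

/-- The upward recursion `ψ_l = φ_{N+2−l}` generating the sequence `φ`. -/
def psiSeq (n : ℕ) (κ α : ℝ) : ℕ → ℝ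
  | 0 => 1
  | 1 => 1 - α ^ 2 + κ
  | l + 2 => (1 + α ^ 2 * (κ - (n : ℝ)) + κ) * psiSeq n κ α (l + 1)
      - α ^ 2 * κ * (κ + 1 - (n : ℝ)) * psiSeq n κ α l


lemma tri_step (f : ℕ → ℕ → ℝ) (m : ℕ)
    (hcol : ∀ i < m, f i (m+1) = 0) (hrow : ∀ j < m, f (m+1) j = 0) :
    (Matrix.of fun i j : Fin (m+2) => f i j).det =
      f (m+1) (m+1) * (Matrix.of fun i j : Fin (m+1) => f i j).det
      - f m (m+1) * f (m+1) m * (Matrix.of fun i j : Fin m => f i j).det := by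
  set A : Matrix (Fin (m+2)) (Fin (m+2)) ℝ := Matrix.of fun i j : Fin (m+2) => f i j with hA
  have h1 : A.det = ∑ i : Fin (m+2), (-1) ^ (i.val + (Fin.last (m+1)).val) * A i (Fin.last (m+1))
      * (A.submatrix i.succAbove (Fin.last (m+1)).succAbove).det :=
    Matrix.det_succ_column A (Fin.last (m+1))
  rw [h1, Fin.sum_univ_castSucc, Fin.sum_univ_castSucc]
  have hz : ∀ i : Fin m, (-1:ℝ) ^ ((Fin.castSucc (Fin.castSucc i)).val + (Fin.last (m+1)).val)
      * A (Fin.castSucc (Fin.castSucc i)) (Fin.last (m+1))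
      * (A.submatrix (Fin.castSucc (Fin.castSucc i)).succAbove (Fin.last (m+1)).succAbove).det = 0 := by
    intro i
    have : A (Fin.castSucc (Fin.castSucc i)) (Fin.last (m+1)) = 0 := hcol i.val i.isLt
    rw [this]; ring
  rw [Finset.sum_congr rfl (fun i _ => hz i), Finset.sum_const_zero, zero_add]
  -- the two remaining terms
  have hS1 : (A.submatrix (Fin.last (m+1)).succAbove (Fin.last (m+1)).succAbove)
      = Matrix.of fun i j : Fin (m+1) => f i j := by
    ext i j
    simp [Fin.succAbove_last, hA]
  -- second term: i₀ = castSucc (last m)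
  set i₀ : Fin (m+2) := Fin.castSucc (Fin.last m) with hi₀
  set S2 : Matrix (Fin (m+1)) (Fin (m+1)) ℝ := A.submatrix i₀.succAbove (Fin.last (m+1)).succAbove with hS2def
  have hS2row : ∀ j : Fin (m+1), S2 (Fin.last m) j = f (m+1) j.val := by
    intro j
    have h3 : i₀.succAbove (Fin.last m) = Fin.last (m+1) := by
      rw [Fin.succAbove_of_le_castSucc _ _ (le_refl _)]; simp [Fin.succ_last]
    simp [hS2def, h3, Fin.succAbove_last, hA]
  have hS2det : S2.det = f (m+1) m * (Matrix.of fun i j : Fin m => f i j).det := by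
    have h2 : S2.det = ∑ j : Fin (m+1), (-1) ^ ((Fin.last m).val + j.val) * S2 (Fin.last m) j
        * (S2.submatrix (Fin.last m).succAbove j.succAbove).det :=
      Matrix.det_succ_row S2 (Fin.last m)
    rw [h2, Fin.sum_univ_castSucc]
    have hz2 : ∀ j : Fin m, (-1:ℝ) ^ ((Fin.last m).val + (Fin.castSucc j).val) * S2 (Fin.last m) (Fin.castSucc j)
        * (S2.submatrix (Fin.last m).succAbove (Fin.castSucc j).succAbove).det = 0 := by
      intro j
      rw [hS2row]
      have : f (m+1) (Fin.castSucc j).val = 0 := hrow j.val j.isLt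
      rw [this]; ring
    rw [Finset.sum_congr rfl (fun j _ => hz2 j), Finset.sum_const_zero, zero_add]
    have hsub : S2.submatrix (Fin.last m).succAbove (Fin.last m).succAbove
        = Matrix.of fun i j : Fin m => f i j := by
      ext i j
      have h4 : i₀.succAbove (Fin.castSucc i) = Fin.castSucc (Fin.castSucc i) := by
        apply Fin.succAbove_of_castSucc_lt
        simp [Fin.lt_def]; exact i.isLt
      simp [hS2def, Fin.succAbove_last, h4, hA]
    rw [hS2row, hsub]
    have : ((-1:ℝ)) ^ ((Fin.last m).val + (Fin.last m).val) = 1 :=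
      Even.neg_one_pow ⟨(Fin.last m).val, rfl⟩
    rw [this]; simp
  have hAi₀ : A i₀ (Fin.last (m+1)) = f m (m+1) := by simp [hA, hi₀]
  have hAlast : A (Fin.last (m+1)) (Fin.last (m+1)) = f (m+1) (m+1) := by simp [hA]
  rw [hS1, hS2det, hAi₀, hAlast]
  have e1 : ((-1:ℝ)) ^ ((i₀:Fin (m+2)).val + (Fin.last (m+1)).val) = -1 := by
    have : (i₀:Fin (m+2)).val + (Fin.last (m+1)).val = 2*m+1 := by
      simp [hi₀]; omega
    rw [this]; exact Odd.neg_one_pow ⟨m, by ring⟩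
  have e2 : ((-1:ℝ)) ^ ((Fin.last (m+1)).val + (Fin.last (m+1)).val) = 1 := by
    exact Even.neg_one_pow ⟨m+1, rfl⟩
  rw [e1, e2]; ring

/-- Leading principal minors of the tridiagonal matrix. -/
noncomputable def dtf (N n : ℕ) (κ α : ℝ) (k : ℕ) : ℝ :=
  (Matrix.of fun i j : Fin k => Bf N n κ α i.val j.val).det

section myaux
variable (N n : ℕ) (κ α : ℝ)

lemma Bf_diag0 : Bf N n κ α 0 0 = 1 - (n:ℝ) * α ^ 2 + κ := by simp [Bf]

lemma Bf_diagN (h : N ≠ 0) : Bf N n κ α N N = 1 - α ^ 2 + κ := by simp [Bf, h]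

lemma Bf_diag_mid (i : ℕ) (h0 : i ≠ 0) (hN : i ≠ N) :
    Bf N n κ α i i = 1 + α ^ 2 * (κ - (n:ℝ)) + κ := by simp [Bf, h0, hN]

lemma Bf_sup (i : ℕ) : Bf N n κ α i (i+1) = -(α * κ) := by
  simp [Bf, Nat.ne_of_lt (Nat.lt_succ_self i)]

lemma Bf_sub (i : ℕ) : Bf N n κ α (i+1) i = -(α * (κ + 1 - (n:ℝ))) := by
  have h1 : i + 1 ≠ i := by omega
  have h2 : ¬ (i = i + 1 + 1) := by omega
  simp [Bf, h1, h2]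

lemma Bf_zero (i j : ℕ) (h1 : i ≠ j) (h2 : j ≠ i + 1) (h3 : i ≠ j + 1) :
    Bf N n κ α i j = 0 := by simp [Bf, h1, h2, h3]

lemma dtf_zero : dtf N n κ α 0 = 1 := Matrix.det_fin_zero

lemma dtf_one : dtf N n κ α 1 = 1 - (n:ℝ) * α ^ 2 + κ := by
  rw [dtf, Matrix.det_fin_one]
  exact Bf_diag0 N n κ α

lemma dtf_rec (m : ℕ) :
    dtf N n κ α (m+2) = Bf N n κ α (m+1) (m+1) * dtf N n κ α (m+1)
      - α ^ 2 * κ * (κ + 1 - (n:ℝ)) * dtf N n κ α m := by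
  have h := tri_step (fun i j => Bf N n κ α i j) m
    (fun i hi => Bf_zero N n κ α i (m+1) (by omega) (by omega) (by omega))
    (fun j hj => Bf_zero N n κ α (m+1) j (by omega) (by omega) (by omega))
  simp only [dtf]
  have hc : (Matrix.of fun i j : Fin (m+2) => Bf N n κ α i.val j.val) =
      (Matrix.of fun i j : Fin (m+2) => (fun i j => Bf N n κ α i j) i.val j.val) := rfl
  rw [hc, h]
  rw [Bf_sup, Bf_sub]
  ring_nf

lemma psi_rec (l : ℕ) : psiSeq n κ α (l+2)
    = (1 + α ^ 2 * (κ - (n:ℝ)) + κ) * psiSeq n κ α (l+1)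
      - α ^ 2 * κ * (κ + 1 - (n:ℝ)) * psiSeq n κ α l := rfl

end myaux
section mypos

lemma step_pos_aux (a b s x0 x1 x2 : ℝ) (hs : 0 < s) (hb : 0 ≤ b)
    (hq : s ^ 2 ≤ a * s - b) (hrec : x2 = a * x1 - b * x0)
    (h0 : 0 < x0) (hstep : s * x0 ≤ x1) :
    0 < x1 ∧ s * x1 ≤ x2 := by
  have h1 : 0 < x1 := lt_of_lt_of_le (by positivity) hstep
  refine ⟨h1, ?_⟩
  have h2 : b * (s * x0) ≤ b * x1 := mul_le_mul_of_nonneg_left hstep hb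
  have h3 : s ^ 2 * x1 ≤ (a * s - b) * x1 := mul_le_mul_of_nonneg_right hq (le_of_lt h1)
  have h4 : s * x2 = a * s * x1 - b * (s * x0) := by rw [hrec]; ring
  have h5 : s * (s * x1) ≤ s * x2 := by nlinarith [h2, h3, h4]
  exact le_of_mul_le_mul_left h5 hs

lemma step_neg_aux (a b s x0 x1 x2 : ℝ) (ha : 0 < a) (hs : 0 < s) (hb : b ≤ 0)
    (hasb : 0 < a * s - b) (hq : a * s - b ≤ s ^ 2) (hrec : x2 = a * x1 - b * x0)
    (h0 : 0 < x0) (hub : x1 ≤ s * x0) (hlb : (a * s - b) * x0 ≤ s * x1) :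
    0 < x1 ∧ x2 ≤ s * x1 ∧ (a * s - b) * x1 ≤ s * x2 := by
  have h1 : 0 < x1 := by nlinarith [mul_pos hasb h0]
  refine ⟨h1, ?_, ?_⟩
  · have h2 : (-b) * ((a * s - b) * x0) ≤ (-b) * (s * x1) :=
      mul_le_mul_of_nonneg_left hlb (by linarith)
    have h4 : a * x1 * ((a * s - b) - s ^ 2) ≤ 0 := by
      have := mul_nonneg (le_of_lt (mul_pos ha h1)) (by linarith : (0:ℝ) ≤ s ^ 2 - (a * s - b))
      nlinarith [this]
    have h5 : (a * s - b) * x2 ≤ (a * s - b) * (s * x1) := by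
      have hx : (a * s - b) * x2 = a * ((a * s - b) * x1) + (-b) * ((a * s - b) * x0) := by
        rw [hrec]; ring
      nlinarith [h2, h4]
    exact le_of_mul_le_mul_left h5 hasb
  · have h6 : (-b) * x1 ≤ (-b) * (s * x0) := mul_le_mul_of_nonneg_left hub (by linarith)
    have h7 : s * x2 = a * s * x1 + (-b) * (s * x0) := by rw [hrec]; ring
    nlinarith [h6, h7]

variable (N n : ℕ) (κ α : ℝ)

lemma psiSeq_zero : psiSeq n κ α 0 = 1 := rfl
lemma psiSeq_one : psiSeq n κ α 1 = 1 - α ^ 2 + κ := rfl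

-- regime κ ≥ n−1 (b ≥ 0)
lemma psi_inv_pos (hn : 2 ≤ n) (hα0 : 0 < α) (hα1 : α < 1)
    (hc : (n:ℝ) - 1 ≤ κ) :
    ∀ m, 0 < psiSeq n κ α m ∧
      (1 - α ^ 2 + κ) * psiSeq n κ α m ≤ psiSeq n κ α (m+1) := by
  have hn2 : (2:ℝ) ≤ (n:ℝ) := by exact_mod_cast hn
  have hα2 : α ^ 2 < 1 := by nlinarith
  have hκpos : 0 < κ := by nlinarith
  have hs : 0 < 1 - α ^ 2 + κ := by nlinarith
  have hb : 0 ≤ α ^ 2 * κ * (κ + 1 - (n:ℝ)) := by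
    have : 0 ≤ κ + 1 - (n:ℝ) := by nlinarith
    positivity
  have hq : (1 - α ^ 2 + κ) ^ 2 ≤ (1 + α ^ 2 * (κ - (n:ℝ)) + κ) * (1 - α ^ 2 + κ)
      - α ^ 2 * κ * (κ + 1 - (n:ℝ)) := by nlinarith [sq_nonneg α]
  intro m
  induction m with
  | zero =>
    constructor
    · norm_num [psiSeq_zero]
    · rw [psiSeq_zero, psiSeq_one]; linarith
  | succ m ih =>
    exact step_pos_aux _ _ _ _ _ _ hs hb hq (psi_rec n κ α m) ih.1 ih.2

-- regime κ < n−1 (b < 0)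
lemma psi_inv_neg (hn : 2 ≤ n) (hκ2 : ((n:ℝ) - 1) / 2 ≤ κ) (hα0 : 0 < α) (hα1 : α < 1)
    (hc : κ < (n:ℝ) - 1) :
    ∀ m, 0 < psiSeq n κ α m ∧
      psiSeq n κ α (m+1) ≤ (1 - α ^ 2 + κ) * psiSeq n κ α m ∧
      ((1 + α ^ 2 * (κ - (n:ℝ)) + κ) * (1 - α ^ 2 + κ) - α ^ 2 * κ * (κ + 1 - (n:ℝ)))
          * psiSeq n κ α m ≤ (1 - α ^ 2 + κ) * psiSeq n κ α (m+1) := by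
  have hn2 : (2:ℝ) ≤ (n:ℝ) := by exact_mod_cast hn
  have hα2 : α ^ 2 < 1 := by nlinarith
  have hκpos : 0 < κ := by nlinarith
  have hs : 0 < 1 - α ^ 2 + κ := by nlinarith
  have ha : 0 < 1 + α ^ 2 * (κ - (n:ℝ)) + κ := by nlinarith
  have hb : α ^ 2 * κ * (κ + 1 - (n:ℝ)) ≤ 0 := by
    have h1 : κ + 1 - (n:ℝ) < 0 := by linarith
    have h2 : 0 < α ^ 2 * κ := by positivity
    nlinarith
  have hasb : 0 < (1 + α ^ 2 * (κ - (n:ℝ)) + κ) * (1 - α ^ 2 + κ) - α ^ 2 * κ * (κ + 1 - (n:ℝ)) := by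
    nlinarith [mul_pos ha hs]
  have hq : (1 + α ^ 2 * (κ - (n:ℝ)) + κ) * (1 - α ^ 2 + κ)
      - α ^ 2 * κ * (κ + 1 - (n:ℝ)) ≤ (1 - α ^ 2 + κ) ^ 2 := by nlinarith [sq_nonneg α]
  intro m
  induction m with
  | zero =>
    refine ⟨by norm_num [psiSeq_zero], ?_, ?_⟩
    · rw [psiSeq_zero, psiSeq_one]; linarith
    · rw [psiSeq_zero, psiSeq_one]; nlinarith
  | succ m ih =>
    exact step_neg_aux _ _ _ _ _ _ ha hs hb hasb hq (psi_rec n κ α m) ih.1 ih.2.1 ih.2.2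

end mypos
/-- The cross product `δ_i φ_{i+1} − b δ_{i−1} φ_{i+2}` (1-based `i`), in `ψ` indices. -/
noncomputable def Gfun (N n : ℕ) (κ α : ℝ) (i : ℕ) : ℝ :=
  dtf N n κ α i * psiSeq n κ α (N + 1 - i)
    - α ^ 2 * κ * (κ + 1 - (n:ℝ)) * dtf N n κ α (i-1) * psiSeq n κ α (N - i)

section myG
variable (N n : ℕ) (κ α : ℝ)

lemma G_stepup (i : ℕ) (h1 : 1 ≤ i) (hi : i ≤ N - 1) (hN : 2 ≤ N) :
    Gfun N n κ α i = Gfun N n κ α (i+1) := by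
  unfold Gfun
  have e0 : N + 1 - (i+1) = N - i := by omega
  have e1 : N - (i+1) = N - i - 1 := by omega
  have e2 : i + 1 - 1 = i := by omega
  rw [e0, e1, e2]
  have e3 : N + 1 - i = (N - i - 1) + 2 := by omega
  have hpsi := psi_rec n κ α (N - i - 1)
  have e4 : N - i - 1 + 1 = N - i := by omega
  rw [e4] at hpsi
  have hdet := dtf_rec N n κ α (i-1)
  have e5 : i - 1 + 2 = i + 1 := by omega
  have e6 : i - 1 + 1 = i := by omega
  rw [e5, e6] at hdet
  rw [Bf_diag_mid N n κ α i (by omega) (by omega)] at hdet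
  rw [e3, hpsi, hdet]
  ring

lemma G_base (hN : 1 ≤ N) : Gfun N n κ α N = dtf N n κ α (N+1) := by
  unfold Gfun
  have e0 : N + 1 - N = 1 := by omega
  have e1 : N - N = 0 := by omega
  rw [e0, e1]
  have hdet := dtf_rec N n κ α (N-1)
  have e3 : N - 1 + 2 = N + 1 := by omega
  have e4 : N - 1 + 1 = N := by omega
  rw [e3, e4] at hdet
  rw [Bf_diagN N n κ α (by omega)] at hdet
  rw [psiSeq_one, psiSeq_zero, hdet]
  ring

lemma G_const (hN : 2 ≤ N) (i : ℕ) (h1 : 1 ≤ i) (hi : i ≤ N) :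
    Gfun N n κ α i = dtf N n κ α (N+1) := by
  have key : ∀ d, 1 ≤ N - d → Gfun N n κ α (N - d) = dtf N n κ α (N+1) := by
    intro d
    induction d with
    | zero => intro _; simpa using G_base N n κ α (by omega)
    | succ d ih =>
      intro hd
      have hstep := G_stepup N n κ α (N - (d+1)) (by omega) (by omega) hN
      have e8 : N - (d+1) + 1 = N - d := by omega
      rw [e8] at hstep
      rw [hstep]
      exact ih (by omega)
  have := key (N - i) (by omega)
  rwa [show N - (N - i) = i from by omega] at this

lemma D_pos (hn : 2 ≤ n) (hN : 2 ≤ N) (hκ2 : ((n:ℝ) - 1) / 2 ≤ κ)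
    (hα0 : 0 < α) (hα1 : α < 1) : 0 < dtf N n κ α (N+1) := by
  have hn2 : (2:ℝ) ≤ (n:ℝ) := by exact_mod_cast hn
  have hα2 : α ^ 2 < 1 := by nlinarith
  have hκpos : 0 < κ := by nlinarith
  have hs : 0 < 1 - α ^ 2 + κ := by nlinarith
  have hG := G_const N n κ α hN 1 le_rfl (by omega)
  unfold Gfun at hG
  rw [show N + 1 - 1 = N from by omega, show (1:ℕ) - 1 = 0 from rfl,
    dtf_zero, dtf_one] at hG
  -- hG : (1 - n α² + κ) ψ N − b · 1 · ψ (N−1) = D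
  have hkey : (1 - (n:ℝ) * α ^ 2 + κ) * (1 - α ^ 2 + κ) - α ^ 2 * κ * (κ + 1 - (n:ℝ))
      = (1 - α ^ 2) * ((1 + κ) ^ 2 - (n:ℝ) * α ^ 2) := by ring
  have hkey_pos : 0 < (1 - α ^ 2) * ((1 + κ) ^ 2 - (n:ℝ) * α ^ 2) := by
    have h1 : 0 < (1 + κ) ^ 2 - (n:ℝ) * α ^ 2 := by nlinarith [sq_nonneg ((n:ℝ) - 1)]
    have h2 : 0 < 1 - α ^ 2 := by linarith
    positivity
  have eN : N - 1 + 1 = N := by omega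
  rcases le_or_gt ((n:ℝ) - 1) κ with hc | hc
  · -- b ≥ 0
    have hb : 0 ≤ α ^ 2 * κ * (κ + 1 - (n:ℝ)) := by
      have : 0 ≤ κ + 1 - (n:ℝ) := by nlinarith
      positivity
    obtain ⟨hp0, hstep⟩ := psi_inv_pos n κ α hn hα0 hα1 hc (N - 1)
    rw [eN] at hstep
    have hpN : 0 < psiSeq n κ α N := lt_of_lt_of_le (by positivity) hstep
    -- s*D ≥ (δ₁ s − b) ψ_N > 0
    have h3 : α ^ 2 * κ * (κ + 1 - (n:ℝ)) * ((1 - α ^ 2 + κ) * psiSeq n κ α (N-1))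
        ≤ α ^ 2 * κ * (κ + 1 - (n:ℝ)) * psiSeq n κ α N := mul_le_mul_of_nonneg_left hstep hb
    have h4 : 0 < ((1 - α ^ 2) * ((1 + κ) ^ 2 - (n:ℝ) * α ^ 2)) * psiSeq n κ α N :=
      mul_pos hkey_pos hpN
    have h8 : ((1 - (n:ℝ) * α ^ 2 + κ) * (1 - α ^ 2 + κ) - α ^ 2 * κ * (κ + 1 - (n:ℝ)))
        * psiSeq n κ α N
        = ((1 - α ^ 2) * ((1 + κ) ^ 2 - (n:ℝ) * α ^ 2)) * psiSeq n κ α N := by rw [hkey]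
    have h5 : 0 < (1 - α ^ 2 + κ) * dtf N n κ α (N+1) := by
      have hGmul : (1 - α ^ 2 + κ) * ((1 - (n:ℝ) * α ^ 2 + κ) * psiSeq n κ α N
          - α ^ 2 * κ * (κ + 1 - (n:ℝ)) * 1 * psiSeq n κ α (N-1))
          = (1 - α ^ 2 + κ) * dtf N n κ α (N+1) := by rw [hG]
      nlinarith [h3, h4, h8, hGmul]
    rcases mul_pos_iff.mp h5 with ⟨_, h⟩ | ⟨h, _⟩
    · exact h
    · linarith
  · -- b < 0
    have hbneg : α ^ 2 * κ * (κ + 1 - (n:ℝ)) < 0 := by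
      have h1 : κ + 1 - (n:ℝ) < 0 := by linarith
      have h2 : 0 < α ^ 2 * κ := by positivity
      nlinarith
    obtain ⟨hp0, hub, _⟩ := psi_inv_neg n κ α hn hκ2 hα0 hα1 hc (N - 1)
    rw [eN] at hub
    obtain ⟨hpN, _, _⟩ := psi_inv_neg n κ α hn hκ2 hα0 hα1 hc N
    rcases le_or_gt 0 (1 - (n:ℝ) * α ^ 2 + κ) with hd1 | hd1
    · -- δ₁ ≥ 0 : D = δ₁ ψN + (−b) ψ_{N−1} > 0
      have t1 : 0 ≤ (1 - (n:ℝ) * α ^ 2 + κ) * psiSeq n κ α N := mul_nonneg hd1 (le_of_lt hpN)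
      have t2 : 0 < (-(α ^ 2 * κ * (κ + 1 - (n:ℝ)))) * psiSeq n κ α (N-1) :=
        mul_pos (by linarith) hp0
      linarith [t1, t2, hG]
    · -- δ₁ < 0 : D ≥ (δ₁ s − b) ψ_{N−1} > 0
      have h6 : (1 - (n:ℝ) * α ^ 2 + κ) * ((1 - α ^ 2 + κ) * psiSeq n κ α (N-1))
          ≤ (1 - (n:ℝ) * α ^ 2 + κ) * psiSeq n κ α N :=
        mul_le_mul_of_nonpos_left hub (le_of_lt hd1)
      have h7 : 0 < ((1 - α ^ 2) * ((1 + κ) ^ 2 - (n:ℝ) * α ^ 2)) * psiSeq n κ α (N-1) :=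
        mul_pos hkey_pos hp0
      have h8 : ((1 - (n:ℝ) * α ^ 2 + κ) * (1 - α ^ 2 + κ) - α ^ 2 * κ * (κ + 1 - (n:ℝ)))
          * psiSeq n κ α (N-1)
          = ((1 - α ^ 2) * ((1 + κ) ^ 2 - (n:ℝ) * α ^ 2)) * psiSeq n κ α (N-1) := by rw [hkey]
      linarith [h6, h7, h8, hG]

lemma D_ne (hn : 2 ≤ n) (hN : 2 ≤ N) (hκ2 : ((n:ℝ) - 1) / 2 ≤ κ)
    (hα0 : 0 < α) (hα1 : α < 1) : dtf N n κ α (N+1) ≠ 0 :=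
  ne_of_gt (D_pos N n κ α hn hN hκ2 hα0 hα1)

end myG
section mysum

lemma sum_two (f : ℕ → ℝ) (M : ℕ) (hM : 1 ≤ M)
    (h : ∀ x ≤ M, x ≠ 0 → x ≠ 1 → f x = 0) :
    ∑ j ∈ Finset.range (M+1), f j = f 0 + f 1 := by
  have hsub : ({0,1} : Finset ℕ) ⊆ Finset.range (M+1) := by
    intro x hx
    simp only [Finset.mem_insert, Finset.mem_singleton] at hx
    simp only [Finset.mem_range]; omega
  rw [← Finset.sum_subset hsub]
  · rw [Finset.sum_insert (by simp), Finset.sum_singleton]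
  · intro x hx hnx
    simp only [Finset.mem_range] at hx
    simp only [Finset.mem_insert, Finset.mem_singleton, not_or] at hnx
    exact h x (by omega) hnx.1 hnx.2

lemma sum_two' (f : ℕ → ℝ) (M : ℕ) (hM : 1 ≤ M)
    (h : ∀ x ≤ M, x ≠ M - 1 → x ≠ M → f x = 0) :
    ∑ j ∈ Finset.range (M+1), f j = f (M-1) + f M := by
  have hsub : ({M-1, M} : Finset ℕ) ⊆ Finset.range (M+1) := by
    intro x hx
    simp only [Finset.mem_insert, Finset.mem_singleton] at hx
    simp only [Finset.mem_range]; omega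
  rw [← Finset.sum_subset hsub]
  · rw [Finset.sum_insert (by simp only [Finset.mem_insert, Finset.mem_singleton, not_or]; omega), Finset.sum_singleton]
  · intro x hx hnx
    simp only [Finset.mem_range] at hx
    simp only [Finset.mem_insert, Finset.mem_singleton, not_or] at hnx
    exact h x (by omega) hnx.1 hnx.2

lemma sum_three (f : ℕ → ℝ) (M i : ℕ) (h1 : 1 ≤ i) (hi : i + 1 ≤ M)
    (h : ∀ x ≤ M, x ≠ i - 1 → x ≠ i → x ≠ i + 1 → f x = 0) :
    ∑ j ∈ Finset.range (M+1), f j = f (i-1) + f i + f (i+1) := by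
  have hsub : ({i-1, i, i+1} : Finset ℕ) ⊆ Finset.range (M+1) := by
    intro x hx
    simp only [Finset.mem_insert, Finset.mem_singleton] at hx
    simp only [Finset.mem_range]; omega
  rw [← Finset.sum_subset hsub]
  · rw [Finset.sum_insert (by simp only [Finset.mem_insert, Finset.mem_singleton, not_or]; omega), Finset.sum_insert (by simp only [Finset.mem_insert, Finset.mem_singleton, not_or]; omega),
      Finset.sum_singleton]
    ring
  · intro x hx hnx
    simp only [Finset.mem_range] at hx
    simp only [Finset.mem_insert, Finset.mem_singleton, not_or] at hnx
    exact h x (by omega) hnx.1 hnx.2.1 hnx.2.2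

end mysum

/-- Candidate inverse entries (times nothing; already divided by `det`). -/
noncomputable def Mf (N n : ℕ) (κ α : ℝ) (j k : ℕ) : ℝ :=
  if j ≤ k then
    (α * κ) ^ (k - j) * dtf N n κ α j * psiSeq n κ α (N - k) / dtf N n κ α (N+1)
  else
    (α * (κ + 1 - (n:ℝ))) ^ (j - k) * dtf N n κ α k * psiSeq n κ α (N - j) / dtf N n κ α (N+1)
section myrow
variable (N n : ℕ) (κ α : ℝ)

lemma Mf_le {j k : ℕ} (h : j ≤ k) : Mf N n κ α j k
    = (α * κ) ^ (k - j) * dtf N n κ α j * psiSeq n κ α (N - k) / dtf N n κ α (N+1) := by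
  unfold Mf; rw [if_pos h]

lemma Mf_gt {j k : ℕ} (h : k < j) : Mf N n κ α j k
    = (α * (κ + 1 - (n:ℝ))) ^ (j - k) * dtf N n κ α k * psiSeq n κ α (N - j)
      / dtf N n κ α (N+1) := by
  unfold Mf; rw [if_neg (by omega)]

lemma Bf_sub' (i : ℕ) (h : 1 ≤ i) : Bf N n κ α i (i-1) = -(α * (κ + 1 - (n:ℝ))) := by
  have := Bf_sub N n κ α (i-1)
  rwa [show i - 1 + 1 = i from by omega] at this

lemma div_trick (x y D : ℝ) (hD : D ≠ 0) (h1 : x = y / D) (h2 : y = D) : x = 1 := by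
  rw [h1, h2, div_self hD]

lemma rowsum (hn : 2 ≤ n) (hN : 2 ≤ N) (hκ2 : ((n:ℝ) - 1) / 2 ≤ κ)
    (hα0 : 0 < α) (hα1 : α < 1) (i k : ℕ) (hi : i ≤ N) (hk : k ≤ N) :
    ∑ j ∈ Finset.range (N+1), Bf N n κ α i j * Mf N n κ α j k
      = if i = k then 1 else 0 := by
  have hD : dtf N n κ α (N+1) ≠ 0 := D_ne N n κ α hn hN hκ2 hα0 hα1
  by_cases hi0 : i = 0
  · -- first row
    subst hi0
    have hz : ∀ x ≤ N, x ≠ 0 → x ≠ 1 → Bf N n κ α 0 x * Mf N n κ α x k = 0 := by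
      intro x hx h0 h1
      rw [Bf_zero N n κ α 0 x (fun h => h0 h.symm) h1 (by omega), zero_mul]
    rw [sum_two _ N (by omega) hz]
    rcases Nat.eq_zero_or_pos k with hk0 | hk1
    · subst hk0
      rw [if_pos rfl, Bf_diag0, Bf_sup N n κ α 0, Mf_le N n κ α (le_refl 0),
        Mf_gt N n κ α (by omega : 0 < 1)]
      have hG := G_const N n κ α hN 1 le_rfl (by omega)
      unfold Gfun at hG
      rw [show N + 1 - 1 = N from by omega, show (1:ℕ) - 1 = 0 from rfl,
        dtf_zero, dtf_one] at hG
      rw [dtf_zero]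
      simp only [Nat.sub_zero, Nat.sub_self, pow_zero, pow_one]
      field_simp
      linear_combination hG
    · rw [if_neg (by omega), Bf_diag0, Bf_sup N n κ α 0,
        Mf_le N n κ α (by omega : 0 ≤ k), Mf_le N n κ α (by omega : 1 ≤ k),
        dtf_zero, dtf_one]
      have E : (α * κ) ^ (k - 0) = (α * κ) ^ (k - 1) * (α * κ) := by
        rw [← pow_succ]; congr 1; omega
      rw [E]
      ring
  · by_cases hiN : i = N
    · -- last row
      rw [hiN]
      have hz : ∀ x ≤ N, x ≠ N - 1 → x ≠ N → Bf N n κ α N x * Mf N n κ α x k = 0 := by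
        intro x hx h0 h1
        rw [Bf_zero N n κ α N x (fun h => h1 h.symm) (by omega) (by omega), zero_mul]
      rw [sum_two' _ N (by omega) hz]
      rw [Bf_sub' N n κ α N (by omega), Bf_diagN N n κ α (by omega)]
      rcases Nat.lt_or_ge k N with hkN | hkN
      · -- k < N : zero
        rw [if_neg (by omega), Mf_gt N n κ α (by omega : k < N)]
        have hm : Mf N n κ α (N-1) k = (α * (κ + 1 - (n:ℝ))) ^ (N - 1 - k) * dtf N n κ α k
            * psiSeq n κ α 1 / dtf N n κ α (N+1) := by
          rcases Nat.lt_or_ge k (N-1) with h | h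
          · rw [Mf_gt N n κ α h, show N - (N-1) = 1 from by omega]
          · have hk' : k = N - 1 := by omega
            subst hk'
            rw [Mf_le N n κ α (le_refl _), show N - (N-1) = 1 from by omega,
              show N - 1 - (N-1) = 0 from by omega]
            norm_num
        rw [hm, show N - N = 0 from by omega, psiSeq_one, psiSeq_zero]
        have E : (α * (κ + 1 - (n:ℝ))) ^ (N - k)
            = (α * (κ + 1 - (n:ℝ))) ^ (N - 1 - k) * (α * (κ + 1 - (n:ℝ))) := by
          rw [← pow_succ]; congr 1; omega
        rw [E]
        ring
      · -- k = N : one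
        have hk' : k = N := by omega
        rw [hk']
        rw [if_pos rfl, Mf_le N n κ α (by omega : N - 1 ≤ N), Mf_le N n κ α (le_refl N),
          show N - (N-1) = 1 from by omega, Nat.sub_self, psiSeq_zero]
        have hdet := dtf_rec N n κ α (N-1)
        rw [show N - 1 + 2 = N + 1 from by omega, show N - 1 + 1 = N from by omega,
          Bf_diagN N n κ α (by omega)] at hdet
        simp only [pow_zero, pow_one]
        exact div_trick _ ((1 - α ^ 2 + κ) * dtf N n κ α N
          - α ^ 2 * κ * (κ + 1 - (n:ℝ)) * dtf N n κ α (N-1)) _ hD (by ring) hdet.symm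
    · -- middle row: 1 ≤ i ≤ N−1
      have hi1 : 1 ≤ i := by omega
      have hiN1 : i ≤ N - 1 := by omega
      have hz : ∀ x ≤ N, x ≠ i - 1 → x ≠ i → x ≠ i + 1 →
          Bf N n κ α i x * Mf N n κ α x k = 0 := by
        intro x hx h0 h1 h2
        rw [Bf_zero N n κ α i x (fun h => h1 h.symm) h2 (by omega), zero_mul]
      rw [sum_three _ N i hi1 (by omega) hz]
      rw [Bf_sub' N n κ α i hi1, Bf_diag_mid N n κ α i (by omega) (by omega),
        Bf_sup N n κ α i]
      have hdet := dtf_rec N n κ α (i-1)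
      rw [show i - 1 + 2 = i + 1 from by omega, show i - 1 + 1 = i from by omega,
        Bf_diag_mid N n κ α i (by omega) (by omega)] at hdet
      have hpsi := psi_rec n κ α (N - i - 1)
      rw [show N - i - 1 + 1 = N - i from by omega] at hpsi
      rcases Nat.lt_or_ge k (i-1) with hka | hka
      · -- k ≤ i−2 : all lower branch
        rw [Mf_gt N n κ α (by omega : k < i - 1), Mf_gt N n κ α (by omega : k < i),
          Mf_gt N n κ α (by omega : k < i + 1), if_neg (by omega)]
        rw [show N - (i-1) = (N - i - 1) + 2 from by omega]
        have E1 : (α * (κ + 1 - (n:ℝ))) ^ (i - k)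
            = (α * (κ + 1 - (n:ℝ))) ^ (i - 1 - k) * (α * (κ + 1 - (n:ℝ))) := by
          rw [← pow_succ]; congr 1; omega
        have E2 : (α * (κ + 1 - (n:ℝ))) ^ (i + 1 - k)
            = (α * (κ + 1 - (n:ℝ))) ^ (i - 1 - k) * (α * (κ + 1 - (n:ℝ)))
              * (α * (κ + 1 - (n:ℝ))) := by
          rw [← pow_succ, ← pow_succ]; congr 1; omega
        rw [E1, E2, hpsi, show N - (i+1) = N - i - 1 from by omega]
        ring
      · rcases Nat.lt_or_ge (i+1) k with hkb | hkb
        · -- k ≥ i+2 : all upper branch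
          rw [Mf_le N n κ α (by omega : i - 1 ≤ k), Mf_le N n κ α (by omega : i ≤ k),
            Mf_le N n κ α (by omega : i + 1 ≤ k), if_neg (by omega)]
          have E1 : (α * κ) ^ (k - i) = (α * κ) ^ (k - i - 1) * (α * κ) := by
            rw [← pow_succ]; congr 1; omega
          have E2 : (α * κ) ^ (k - (i-1)) = (α * κ) ^ (k - i - 1) * (α * κ) * (α * κ) := by
            rw [← pow_succ, ← pow_succ]; congr 1; omega
          rw [E1, E2, hdet, show k - (i+1) = k - i - 1 from by omega]
          ring
        · -- k ∈ {i−1, i, i+1}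
          rcases Nat.lt_or_ge k i with hkc | hkc
          · -- k = i − 1 : zero
            have hk' : k = i - 1 := by omega
            rw [hk']
            rw [Mf_le N n κ α (le_refl _), Mf_gt N n κ α (by omega : i - 1 < i),
              Mf_gt N n κ α (by omega : i - 1 < i + 1), if_neg (by omega)]
            rw [show N - (i-1) = (N - i - 1) + 2 from by omega,
              show i - (i-1) = 1 from by omega, show i + 1 - (i-1) = 2 from by omega,
              show N - (i+1) = N - i - 1 from by omega, Nat.sub_self, hpsi]
            ring
          · rcases Nat.lt_or_ge i k with hkd | hkd
            · -- k = i + 1 : zero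
              have hk' : k = i + 1 := by omega
              rw [hk']
              rw [Mf_le N n κ α (by omega : i - 1 ≤ i + 1),
                Mf_le N n κ α (by omega : i ≤ i + 1), Mf_le N n κ α (le_refl _),
                if_neg (by omega)]
              rw [show i + 1 - (i-1) = 2 from by omega, show i + 1 - i = 1 from by omega,
                Nat.sub_self, hdet]
              ring
            · -- k = i : one
              have hk' : k = i := by omega
              rw [hk']
              rw [Mf_le N n κ α (by omega : i - 1 ≤ i), Mf_le N n κ α (le_refl i),
                Mf_gt N n κ α (by omega : i < i + 1), if_pos rfl]
              rw [show i - (i-1) = 1 from by omega, Nat.sub_self,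
                show i + 1 - i = 1 from by omega, show N - (i+1) = N - i - 1 from by omega]
              have hG := G_const N n κ α hN (i+1) (by omega) (by omega)
              unfold Gfun at hG
              rw [show N + 1 - (i+1) = N - i from by omega,
                show N - (i+1) = N - i - 1 from by omega,
                show i + 1 - 1 = i from by omega] at hG
              simp only [pow_zero, pow_one]
              exact div_trick _ ((1 + α ^ 2 * (κ - (n:ℝ)) + κ) * dtf N n κ α i * psiSeq n κ α (N - i)
                  - α ^ 2 * κ * (κ + 1 - (n:ℝ)) * dtf N n κ α (i-1) * psiSeq n κ α (N - i)
                  - α ^ 2 * κ * (κ + 1 - (n:ℝ)) * dtf N n κ α i * psiSeq n κ α (N - i - 1)) _ hD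
                (by ring) (by linear_combination hG - psiSeq n κ α (N - i) * hdet)
end myrow
/-- `B` is nonsingular, with explicit (Usmani) formula for the entries of `B⁻¹`
(paper indices `i,j ∈ {1,…,N+1}` correspond to Lean indices `i.val = i−1`, `j.val = j−1`;
thus `δ_{i−1} = dlt i.val` and `φ_{j+1} = phi (j.val + 2)`). -/
theorem stmt9 (n : ℕ) (hn : 2 ≤ n) (ρ T θ : ℝ) (hρ : 0 < ρ) (hT : 0 < T) (hθ : 0 ≤ θ)
    (N : ℕ) (hN : 2 ≤ N) (κ α : ℝ)
    (hκ : κ = 2 * θ + ((n : ℝ) - 1) / 2) (hα : α = Real.exp (-(ρ * T / N)))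
    (B : Matrix (Fin (N + 1)) (Fin (N + 1)) ℝ)
    (hB : B = Matrix.of (fun i j : Fin (N + 1) => Bf N n κ α i.val j.val))
    (dlt : ℕ → ℝ)
    (hdlt : ∀ k, dlt k = (Matrix.of (fun i j : Fin k => Bf N n κ α i.val j.val)).det)
    (phi : ℕ → ℝ) (hphi : ∀ k, phi k = psiSeq n κ α (N + 2 - k)) :
    IsUnit B.det ∧
    ∀ i j : Fin (N + 1),
      (i ≤ j →
        B⁻¹ i j = (α * κ) ^ (j.val - i.val) * dlt i.val * phi (j.val + 2) / dlt (N + 1)) ∧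
      (j ≤ i →
        B⁻¹ i j = (α * (κ + 1 - (n : ℝ))) ^ (i.val - j.val) * dlt j.val * phi (i.val + 2)
          / dlt (N + 1)) := by
  have hα0 : 0 < α := by rw [hα]; exact Real.exp_pos _
  have hα1 : α < 1 := by
    rw [hα]
    apply Real.exp_lt_one_iff.mpr
    have hNpos : (0:ℝ) < (N:ℝ) := by positivity
    have : 0 < ρ * T / N := by positivity
    linarith
  have hκ2 : ((n:ℝ) - 1) / 2 ≤ κ := by rw [hκ]; linarith
  have hdl : ∀ k, dlt k = dtf N n κ α k := fun k => hdlt k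
  -- the candidate inverse
  set M : Matrix (Fin (N+1)) (Fin (N+1)) ℝ :=
    Matrix.of (fun p q : Fin (N+1) => Mf N n κ α p.val q.val) with hM
  have hBM : B * M = 1 := by
    ext i k
    rw [Matrix.mul_apply, Matrix.one_apply, hB, hM]
    have hsum : ∑ j : Fin (N+1),
        (Matrix.of (fun i j : Fin (N + 1) => Bf N n κ α i.val j.val)) i j
          * (Matrix.of (fun p q : Fin (N+1) => Mf N n κ α p.val q.val)) j k
        = ∑ jn ∈ Finset.range (N+1), Bf N n κ α i.val jn * Mf N n κ α jn k.val := by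
      exact Fin.sum_univ_eq_sum_range (fun jn => Bf N n κ α i.val jn * Mf N n κ α jn k.val) (N+1)
    rw [hsum, rowsum N n κ α hn hN hκ2 hα0 hα1 i.val k.val (by omega) (by omega)]
    by_cases h : i = k
    · rw [if_pos h, if_pos (by rw [h])]
    · rw [if_neg (fun hv => h (Fin.ext hv)), if_neg h]
  refine ⟨Matrix.isUnit_det_of_right_inverse hBM, ?_⟩
  have hinv : B⁻¹ = M := Matrix.inv_eq_right_inv hBM
  intro i j
  have hiv : i.val ≤ N := by omega
  have hjv : j.val ≤ N := by omega
  constructor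
  · intro hij
    have hij' : i.val ≤ j.val := hij
    rw [hinv, hM, Matrix.of_apply, Mf_le N n κ α hij', hphi,
      show N + 2 - (j.val + 2) = N - j.val from by omega, hdl, hdl]
  · intro hji
    have hji' : j.val ≤ i.val := hji
    rcases eq_or_lt_of_le hji' with heq | hlt
    · rw [hinv, hM, Matrix.of_apply, Mf_le N n κ α (le_of_eq heq.symm), hphi,
        show N + 2 - (i.val + 2) = N - i.val from by omega, hdl, hdl,
        show j.val - i.val = 0 from by omega, show i.val - j.val = 0 from by omega,
        pow_zero, pow_zero, heq]
    · rw [hinv, hM, Matrix.of_apply, Mf_gt N n κ α hlt, hphi,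
        show N + 2 - (i.val + 2) = N - i.val from by omega, hdl, hdl]
end
end
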